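/- arXiv:2009.01106 — 2 statements merged into one kernel-verified Lean document; each statement's English description precedes it below -/
import Mathlib

section
/- Let G be a subgroup of S_d acting freely and transitively on {1,...,d}, and let m ≥ 2 be coprime to d. Then the sum over all classes [(g_1,...,g_m)] ∈ S(G,m) of the polynomials φ_{(g_1,...,g_m)}(x_1,...,x_d) = Σ_{i=1}^d x_{g_1(i)}⋯x_{g_m(i)} equals f_{d,m}(x_1,...,x_d), the sum of all monomials of total degree m in the variables x_1,...,x_d (each with coefficient 1). -/
/-!
Send a class `c = [(g_1, …, g_m)]` and a point `x` to the multiset `{g_1 x, …, g_m x}`; then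
`φ_c` is the sum over `x` of the monomials of these multisets, so it suffices that
`S(G,m) × {1,…,d} → Sym^m {1,…,d}` is a bijection, the right-hand side being the complete
homogeneous symmetric polynomial `h_m`. Since `G` acts regularly, any multiset is reached by
lifting a tuple of points through the orbit map of a base point. Conversely, if `(c, k x)` and
`(c', x)` give the same multiset, then `c = c'` and the multiset of coordinates of `c` is
invariant under right multiplication by `k`, so it is a union of cosets of `⟨k⟩`: the order
of `k` divides `m`, and also `|G| = d`, hence `k = 1`.
-/

open Finset

/-- The relation on `m`-tuples of elements of `G` identifying two tuples iff one is
obtained from the other by permuting the coordinates and simultaneously multiplying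
every coordinate on the right by a fixed element of `G`. -/
def SGmRel (G : Type*) [Group G] (m : ℕ) (a b : Fin m → G) : Prop :=
  ∃ (σ : Equiv.Perm (Fin m)) (g : G), ∀ r, b r = a (σ r) * g

/-- `S(G,m) = (G^m / S_m) / G`: the quotient of `G^m` by permutation of coordinates
and simultaneous right multiplication. -/
def SGm (G : Type*) [Group G] (m : ℕ) : Type _ :=
  Quot (SGmRel G m)

namespace Sym

variable {α : Type*} {m : ℕ}

def ofFn (v : Fin m → α) : Sym α m := ⟨univ.val.map v, by simp⟩

@[simp]
theorem coe_ofFn (v : Fin m → α) : (ofFn v : Multiset α) = univ.val.map v := rfl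

theorem map_ofFn {β : Type*} (f : α → β) (v : Fin m → α) : map f (ofFn v) = ofFn (f ∘ v) :=
  Sym.ext (by rw [coe_map, coe_ofFn, coe_ofFn, Multiset.map_map])

theorem ofFn_surjective : Function.Surjective (ofFn : (Fin m → α) → Sym α m) := by
  rintro ⟨s, hs⟩
  induction s using Quot.inductionOn with | h l => ?_
  obtain rfl : l.length = m := hs
  exact ⟨l.get, Sym.ext (by simp [Fin.univ_val_map])⟩

theorem ofFn_eq_ofFn_iff (v w : Fin m → α) :
    ofFn v = ofFn w ↔ ∃ σ : Equiv.Perm (Fin m), v ∘ σ = w := by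
  classical
  constructor
  · intro h
    have hfiber (a : α) : { r // w r = a } ≃ { r // v r = a } := by
      refine Fintype.equivOfCardEq ?_
      have hcount := congrArg (fun s : Sym α m => (s : Multiset α).count a) h
      simp only [coe_ofFn, Multiset.count_map, eq_comm (a := a)] at hcount
      simpa only [Fintype.card_subtype, Finset.card_def, Finset.filter_val] using hcount.symm
    exact ⟨Equiv.ofFiberEquiv hfiber, funext (Equiv.ofFiberEquiv_map hfiber)⟩
  · rintro ⟨σ, rfl⟩
    exact Sym.ext (by rw [coe_ofFn, coe_ofFn, ← Multiset.map_map, Multiset.map_univ_val_equiv])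

end Sym

open MvPolynomial in
theorem MvPolynomial.hsymm_eq_sum_prod_X_pow {σ R : Type*} [CommSemiring R] [Fintype σ]
    [DecidableEq σ] (n : ℕ) :
    hsymm σ R n = ∑ a ∈ (Fintype.piFinset fun _ : σ => range (n + 1)).filter
      (fun a => ∑ i, a i = n), ∏ i, X i ^ a i := by
  have hmem (a : σ → ℕ) : a ∈ (Fintype.piFinset fun _ : σ => range (n + 1)).filter
      (fun a => ∑ i, a i = n) ↔ ∑ i, a i = n := by
    simp only [mem_filter, Fintype.mem_piFinset, mem_range, Nat.lt_succ_iff, and_iff_right_iff_imp]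
    rintro rfl i
    exact single_le_sum (fun _ _ => Nat.zero_le _) (mem_univ i)
  let := Fintype.subtype _ hmem
  rw [sum_subtype _ hmem, hsymm, ← (Sym.equivNatSumOfFintype σ n).sum_comp]
  refine Fintype.sum_congr _ _ fun s => ?_
  simp only [prod_multiset_map_count, Sym.coe_equivNatSumOfFintype_apply_apply]
  refine prod_subset (subset_univ _) fun i _ hi => ?_
  rw [Multiset.count_eq_zero.2 (by simpa using hi), pow_zero]

theorem Subgroup.natCard_dvd_sum_of_mul_right_invariant {G : Type*} [Group G] [Fintype G]
    (H : Subgroup G) (f : G → ℕ) (hf : ∀ g, ∀ h ∈ H, f (g * h) = f g) :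
    Nat.card H ∣ ∑ g, f g := by
  classical
  have := Fintype.ofFinite (G ⧸ H)
  have hbij : Function.Bijective fun p : (G ⧸ H) × H => p.1.out * p.2 := by
    constructor
    · rintro ⟨q, h⟩ ⟨q', h'⟩ heq
      obtain rfl : q = q' := by
        simpa [QuotientGroup.mk_mul_of_mem _ h.2, QuotientGroup.mk_mul_of_mem _ h'.2] using
          congrArg (QuotientGroup.mk (s := H)) heq
      simp_all
    · intro g
      refine ⟨(g, ⟨(g : G ⧸ H).out⁻¹ * g, ?_⟩), by simp⟩
      rw [← QuotientGroup.eq, QuotientGroup.out_eq']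
  rw [← hbij.sum_comp, Fintype.sum_prod_type]
  refine dvd_sum fun q _ => ?_
  simp only [fun h : H => hf q.out h h.2, sum_const, card_univ, smul_eq_mul,
    Nat.card_eq_fintype_card]
  exact dvd_mul_right _ _

theorem orderOf_dvd_card_of_map_mul_right_eq {G : Type*} [Group G] [Finite G] {k : G}
    {M : Multiset G} (hM : M.map (· * k) = M) : orderOf k ∣ Multiset.card M := by
  classical
  have := Fintype.ofFinite G
  have hcount (g : G) (n : ℕ) : M.count (g * k ^ n) = M.count g := by
    induction n with
    | zero => simp
    | succ n ih =>
      rw [pow_succ, ← mul_assoc, ← ih]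
      conv_lhs => rw [← hM]
      exact Multiset.count_map_eq_count' _ _ (mul_left_injective k) _
  rw [← Nat.card_zpowers, ← Multiset.sum_count_eq_card (s := univ) fun _ _ => mem_univ _]
  refine Subgroup.natCard_dvd_sum_of_mul_right_invariant _ _ fun g h hh => ?_
  obtain ⟨n, rfl⟩ := mem_powers_iff_mem_zpowers.2 hh
  exact hcount g n

namespace SGm

variable {G : Type*} [Group G] {m : ℕ}

theorem rel_equivalence : Equivalence (SGmRel G m) where
  refl _ := ⟨1, 1, by simp⟩
  symm := by
    rintro a b ⟨σ, g, h⟩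
    exact ⟨σ⁻¹, g⁻¹, fun r => by simp [h]⟩
  trans := by
    rintro a b c ⟨σ, g, h⟩ ⟨τ, g', h'⟩
    exact ⟨τ.trans σ, g * g', fun r => by simp [h, h', mul_assoc]⟩

theorem rel_out_mk (g : Fin m → G) : SGmRel G m g (Quot.out (Quot.mk (SGmRel G m) g)) :=
  rel_equivalence.eqvGen_iff.mp (Quot.eqvGen_exact (Quot.out_eq _).symm)

instance [Finite G] : Finite (SGm G m) := Quot.finite _

variable {α : Type*} [MulAction G α]

noncomputable def symAt (c : SGm G m) (x : α) : Sym α m :=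
  Sym.ofFn fun r => Quot.out c r • x

theorem injective_symAt [Finite α] (hreg : ∀ x : α, Function.Bijective fun g : G => g • x)
    (hcop : m.Coprime (Nat.card α)) :
    Function.Injective fun p : SGm G m × α => p.1.symAt p.2 := by
  rintro ⟨c, x⟩ ⟨c', x'⟩ h
  have : Finite G := Finite.of_injective _ (hreg x).1
  obtain ⟨k, rfl⟩ := (hreg x').2 x
  have hmul : Sym.ofFn (fun r => Quot.out c r * k) = Sym.ofFn (Quot.out c') := by
    refine Sym.map_injective (hreg x').1 m ?_
    simpa only [symAt, Sym.map_ofFn, Function.comp_def, mul_smul] using h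
  obtain ⟨σ, hσ⟩ := (Sym.ofFn_eq_ofFn_iff _ _).1 hmul
  obtain rfl : c = c' := by
    rw [← Quot.out_eq c, ← Quot.out_eq c']
    exact Quot.sound ⟨σ, k, fun r => (congrFun hσ r).symm⟩
  have hk : orderOf k = 1 := by
    refine Nat.eq_one_of_dvd_coprimes hcop ?_ ?_
    · have hinv : (univ.val.map (Quot.out c)).map (· * k) = univ.val.map (Quot.out c) := by
        simpa only [Sym.coe_ofFn, Multiset.map_map, Function.comp_def] using
          congrArg (fun s : Sym G m => (s : Multiset G)) hmul
      simpa using orderOf_dvd_card_of_map_mul_right_eq hinv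
    · exact Nat.card_eq_of_bijective _ (hreg x') ▸ orderOf_dvd_natCard k
  simp [orderOf_eq_one_iff.1 hk]

theorem surjective_symAt (hreg : ∀ x : α, Function.Bijective fun g : G => g • x)
    (hcop : m.Coprime (Nat.card α)) :
    Function.Surjective fun p : SGm G m × α => p.1.symAt p.2 := by
  intro s
  obtain ⟨x₀⟩ : Nonempty α := by
    rcases m with _ | n
    · -- for `m = 0` coprimality forces `Nat.card α = 1`
      exact (Nat.card_pos_iff.1 (by simp_all)).1
    · exact ⟨(Sym.exists_mem s).choose⟩
  obtain ⟨v, rfl⟩ := Sym.ofFn_surjective s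
  choose g hg using fun r => (hreg x₀).2 (v r)
  obtain ⟨σ, k, hσ⟩ := rel_out_mk g
  refine ⟨(Quot.mk _ g, k⁻¹ • x₀), (Sym.ofFn_eq_ofFn_iff _ _).2 ⟨σ.symm, funext fun r => ?_⟩⟩
  simp [hσ, mul_smul, hg]

theorem bijective_symAt [Finite α] (hreg : ∀ x : α, Function.Bijective fun g : G => g • x)
    (hcop : m.Coprime (Nat.card α)) :
    Function.Bijective fun p : SGm G m × α => p.1.symAt p.2 :=
  ⟨injective_symAt hreg hcop, surjective_symAt hreg hcop⟩

open MvPolynomial in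
theorem finsum_eq_hsymm [Finite G] [Fintype α] [DecidableEq α] {R : Type*} [CommSemiring R]
    (hreg : ∀ x : α, Function.Bijective fun g : G => g • x) (hcop : m.Coprime (Nat.card α))
    (Φ : SGm G m → MvPolynomial α R)
    (hΦ : ∀ g : Fin m → G, Φ (Quot.mk (SGmRel G m) g) = ∑ x, ∏ r, X (g r • x)) :
    ∑ᶠ c, Φ c = hsymm α R m := by
  have := Fintype.ofFinite (SGm G m)
  have hΦ_symAt (c : SGm G m) : Φ c = ∑ x : α, ((c.symAt x : Multiset α).map X).prod := by
    have h := hΦ (Quot.out c)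
    rw [show Quot.mk (SGmRel G m) (Quot.out c) = c from Quot.out_eq c] at h
    simp [h, symAt, prod_eq_multiset_prod, Function.comp_def]
  rw [finsum_eq_sum_of_fintype, hsymm, Fintype.sum_congr _ _ hΦ_symAt, ← Fintype.sum_prod_type']
  exact (bijective_symAt hreg hcop).sum_comp fun s : Sym α m => ((s : Multiset α).map X).prod

end SGm

theorem stmt5_general (d m : ℕ) (hcop : Nat.Coprime m d)
    (G : Subgroup (Equiv.Perm (Fin d)))
    (hreg : ∀ i j : Fin d, ∃! g : G, (g : Equiv.Perm (Fin d)) i = j)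
    (R : Type*) [CommRing R]
    (Φ : SGm (↥G) m → MvPolynomial (Fin d) R)
    (hΦ : ∀ g : Fin m → ↥G,
      Φ (Quot.mk (SGmRel (↥G) m) g) =
        ∑ i : Fin d, ∏ r : Fin m, MvPolynomial.X ((g r : Equiv.Perm (Fin d)) i)) :
    ∑ᶠ c : SGm (↥G) m, Φ c =
      ∑ a ∈ (Fintype.piFinset fun _ : Fin d => Finset.range (m + 1)).filter
          (fun a => ∑ i, a i = m),
        ∏ i : Fin d, (MvPolynomial.X i : MvPolynomial (Fin d) R) ^ a i := by
  have hbij (i : Fin d) : Function.Bijective fun g : G => g • i :=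
    (Function.bijective_iff_existsUnique _).2 (hreg i)
  rw [SGm.finsum_eq_hsymm hbij (by rwa [Nat.card_fin]) Φ hΦ, MvPolynomial.hsymm_eq_sum_prod_X_pow]

/-- Let `G ≤ S_d` act freely and transitively on `{1,...,d}` and `m ≥ 2` be coprime to
`d`. The sum over all classes `c ∈ S(G,m)` of the (well-defined) polynomials
`φ_c = ∑_{i=1}^d ∏_r X_{g_r(i)}` equals the sum of all monomials of total degree `m`
in `X_1, ..., X_d`. -/
theorem stmt5 (d m : ℕ) (hm : 2 ≤ m) (hcop : Nat.Coprime m d)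
    (G : Subgroup (Equiv.Perm (Fin d)))
    (hreg : ∀ i j : Fin d, ∃! g : G, (g : Equiv.Perm (Fin d)) i = j)
    (R : Type*) [CommRing R]
    (Φ : SGm (↥G) m → MvPolynomial (Fin d) R)
    (hΦ : ∀ g : Fin m → ↥G,
      Φ (Quot.mk (SGmRel (↥G) m) g) =
        ∑ i : Fin d, ∏ r : Fin m, MvPolynomial.X ((g r : Equiv.Perm (Fin d)) i)) :
    ∑ᶠ c : SGm (↥G) m, Φ c =
      ∑ a ∈ (Fintype.piFinset fun _ : Fin d => Finset.range (m + 1)).filter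
          (fun a => ∑ i, a i = m),
        ∏ i : Fin d, (MvPolynomial.X i : MvPolynomial (Fin d) R) ^ a i :=
  stmt5_general d m hcop G hreg R Φ hΦ
end

section
/- Let G be a group of order d acting on itself by right multiplication, let m ≥ d. The map sending a class [(h_1,...,h_{m-d})] ∈ S(G,m-d) to [(h_1,...,h_{m-d},g_1,...,g_d)] ∈ S(G,m) (where {g_1,...,g_d} is an enumeration of all of G) is injective. Consequently #S(G,m) - #S(G,m-d) = #S'(G,m), where S'(G,m) is the set of classes in S(G,m) whose representing multisets have at most d-1 distinct elements. -/
/-!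
Two tuples are identified in `S(G,m)` exactly when their multisets of entries differ by one
right translation `x ↦ x * g`. Appending an enumeration of `G` adds the multiset `univ`, which
every right translation fixes, so it cancels and the map is injective. A tuple with all `d`
elements of `G` among its entries has a multiset containing `univ`; what remains is the
multiset of an `(m - d)`-tuple, which is a preimage. So the image is the set of classes of
surjective tuples, and its complement is `S'(G,m)`.
-/

open Finset Function

section Tuples
variable {α β : Type*}

theorem exists_perm_eq_comp_of_map_univ_eq {ι : Type*} [Fintype ι] {a b : ι → α}
    (hab : univ.val.map a = univ.val.map b) : ∃ σ : Equiv.Perm ι, b = a ∘ σ := by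
  classical
  -- equal multisets of values means equinumerous fibres; matching the fibres gives `σ`
  have hfiber (c : α) : Fintype.card {i // b i = c} = Fintype.card {i // a i = c} := by
    have := congrArg (Multiset.count c) hab
    simp only [Multiset.count_map, eq_comm (a := c)] at this
    simp only [Fintype.card_subtype, card_def, filter_val, this]
  exact ⟨Equiv.ofFiberEquiv fun c => Fintype.equivOfCardEq (hfiber c),
    funext fun i => (Equiv.ofFiberEquiv_map _ i).symm⟩

theorem Multiset.exists_fin_map_univ_val_eq {k : ℕ} (s : Multiset α) (hs : s.card = k) :
    ∃ f : Fin k → α, univ.val.map f = s := by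
  obtain ⟨l, rfl⟩ : ∃ l : List α, (l : Multiset α) = s := Quotient.exists_rep s
  rw [Multiset.coe_card] at hs
  subst hs
  exact ⟨l.get, by rw [Fin.univ_val_map, List.ofFn_get]⟩

theorem card_image_univ_le_pred_iff [Fintype α] [Fintype β] [Nonempty β] [DecidableEq β]
    (f : α → β) : #(univ.image f) ≤ Fintype.card β - 1 ↔ ¬Surjective f := by
  rw [Nat.le_sub_one_iff_lt Fintype.card_pos, card_lt_iff_ne_univ]
  simp [eq_univ_iff_forall, Surjective]

variable {d k m : ℕ}

def Fin.appendEnum (e : Fin d ≃ α) (hm : m = k + d) (h : Fin k → α) : Fin m → α :=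
  fun i => Fin.append h (fun r => e r) (Fin.cast hm i)

theorem Fin.appendEnum_surjective (e : Fin d ≃ α) (hm : m = k + d) (h : Fin k → α) :
    Surjective (Fin.appendEnum e hm h) := fun x =>
  ⟨Fin.cast hm.symm (Fin.natAdd k (e.symm x)), by simp [appendEnum]⟩

theorem Fin.map_univ_val_appendEnum [Fintype α] (e : Fin d ≃ α) (hm : m = k + d)
    (h : Fin k → α) :
    univ.val.map (Fin.appendEnum e hm h) = univ.val.map h + univ.val := by
  have : Fin.appendEnum e hm h = Fin.append h e ∘ finCongr hm := rfl
  rw [this, ← Multiset.map_map, Multiset.map_univ_val_equiv, Fin.univ_val_map,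
    List.ofFn_fin_append, ← Multiset.coe_add, ← Fin.univ_val_map, ← Fin.univ_val_map,
    Multiset.map_univ_val_equiv]

end Tuples

section SGm
variable {G : Type*} [Group G] {d k m : ℕ}

theorem SGmRel.equivalence : Equivalence (SGmRel G m) where
  refl _ := ⟨1, 1, by simp⟩
  symm := by
    rintro a b ⟨σ, g, h⟩
    exact ⟨σ.symm, g⁻¹, fun r => by simp [h (σ.symm r)]⟩
  trans := by
    rintro a b c ⟨σ, g, h⟩ ⟨τ, k, h'⟩
    exact ⟨τ.trans σ, g * k, fun r => by rw [h' r, h (τ r), mul_assoc]; rfl⟩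

theorem SGm.mk_eq_mk_iff {a b : Fin m → G} :
    Quot.mk (SGmRel G m) a = Quot.mk (SGmRel G m) b ↔ SGmRel G m a b :=
  Quot.eq.trans SGmRel.equivalence.eqvGen_iff

theorem SGmRel.surjective_iff {a b : Fin m → G} (hab : SGmRel G m a b) :
    Surjective a ↔ Surjective b := by
  obtain ⟨σ, g, hb⟩ := hab
  rw [show b = Equiv.mulRight g ∘ a ∘ σ from funext hb, EquivLike.comp_surjective,
    EquivLike.surjective_comp]

theorem sgmRel_iff_exists_map_univ_val_eq {a b : Fin m → G} :
    SGmRel G m a b ↔ ∃ g : G, univ.val.map b = (univ.val.map a).map (· * g) := by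
  constructor
  · rintro ⟨σ, g, hb⟩
    refine ⟨g, ?_⟩
    rw [show b = (· * g) ∘ a ∘ σ from funext hb, ← Multiset.map_map, ← Multiset.map_map,
      Multiset.map_univ_val_equiv]
  · rintro ⟨g, hg⟩
    rw [Multiset.map_map] at hg
    obtain ⟨σ, hσ⟩ := exists_perm_eq_comp_of_map_univ_eq hg.symm
    exact ⟨σ, g, congrFun hσ⟩

variable [Fintype G]

theorem Multiset.map_mul_right_univ_val (g : G) :
    (univ.val : Multiset G).map (· * g) = univ.val :=
  Multiset.map_univ_val_equiv (Equiv.mulRight g)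

theorem sgmRel_appendEnum_iff (e : Fin d ≃ G) (hm : m = k + d) {h h' : Fin k → G} :
    SGmRel G m (Fin.appendEnum e hm h) (Fin.appendEnum e hm h') ↔ SGmRel G k h h' := by
  simp only [sgmRel_iff_exists_map_univ_val_eq, Fin.map_univ_val_appendEnum, Multiset.map_add,
    Multiset.map_mul_right_univ_val, add_left_inj]

theorem exists_sgmRel_appendEnum_of_surjective (e : Fin d ≃ G) (hm : m = k + d)
    {a : Fin m → G} (ha : Surjective a) : ∃ h, SGmRel G m (Fin.appendEnum e hm h) a := by
  classical
  have hle : (univ.val : Multiset G) ≤ univ.val.map a := by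
    refine (Multiset.le_iff_subset univ.nodup).2 fun x _ => ?_
    obtain ⟨i, rfl⟩ := ha x
    exact Multiset.mem_map_of_mem _ (mem_univ_val i)
  obtain ⟨h, hh⟩ := Multiset.exists_fin_map_univ_val_eq (k := k) (univ.val.map a - univ.val)
    (by simp only [Multiset.card_sub hle, Multiset.card_map, card_val, card_univ,
      Fintype.card_fin, Fintype.card_congr e.symm]; omega)
  refine ⟨h, sgmRel_iff_exists_map_univ_val_eq.2 ⟨1, ?_⟩⟩
  rw [Fin.map_univ_val_appendEnum, hh, tsub_add_cancel_of_le hle]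
  simp only [mul_one, Multiset.map_id']

def SGm.appendEnum (e : Fin d ≃ G) (hm : m = k + d) : SGm G k → SGm G m :=
  Quot.lift (fun h => Quot.mk _ (Fin.appendEnum e hm h)) fun _ _ hr =>
    Quot.sound ((sgmRel_appendEnum_iff e hm).2 hr)

theorem SGm.appendEnum_injective (e : Fin d ≃ G) (hm : m = k + d) :
    Injective (SGm.appendEnum e hm) := by
  rintro ⟨h⟩ ⟨h'⟩ hq
  exact Quot.sound ((sgmRel_appendEnum_iff e hm).1 (SGm.mk_eq_mk_iff.1 hq))

theorem SGm.compl_range_appendEnum (e : Fin d ≃ G) (hm : m = k + d) :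
    (Set.range (SGm.appendEnum e hm))ᶜ =
      {c | ∃ a : Fin m → G, Quot.mk (SGmRel G m) a = c ∧ ¬Surjective a} := by
  ext c
  constructor
  · intro hc
    obtain ⟨a, rfl⟩ := Quot.exists_rep c
    refine ⟨a, rfl, fun ha => hc ?_⟩
    obtain ⟨h, hh⟩ := exists_sgmRel_appendEnum_of_surjective e hm ha
    exact ⟨Quot.mk _ h, Quot.sound hh⟩
  · rintro ⟨a, rfl, ha⟩ ⟨⟨h⟩, hh⟩
    exact ha ((SGm.mk_eq_mk_iff.1 hh).surjective_iff.1 (Fin.appendEnum_surjective e hm h))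

end SGm

/-- Let `G` be a group of order `d` and `m ≥ d`, and let `e : Fin d ≃ G` be an
enumeration `g_1, ..., g_d` of `G`. The map `S(G,m-d) → S(G,m)` sending
`[(h_1,...,h_{m-d})]` to `[(h_1,...,h_{m-d},g_1,...,g_d)]` is injective, and consequently
`#S(G,m) - #S(G,m-d)` equals the cardinality of the set `S'(G,m)` of classes in `S(G,m)`
represented by tuples with at most `d - 1` distinct entries. -/
theorem stmt9 (d m : ℕ) (G : Type*) [Group G] [DecidableEq G]
    (hdm : d ≤ m) (e : Fin d ≃ G) :
    (∀ h h' : Fin (m - d) → G,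
      Quot.mk (SGmRel G m)
          (fun i => Fin.append h (fun r => e r) (Fin.cast (by omega) i)) =
        Quot.mk (SGmRel G m)
          (fun i => Fin.append h' (fun r => e r) (Fin.cast (by omega) i)) →
      Quot.mk (SGmRel G (m - d)) h = Quot.mk (SGmRel G (m - d)) h') ∧
    Nat.card (SGm G m) - Nat.card (SGm G (m - d)) =
      Nat.card {c : SGm G m // ∃ g : Fin m → G,
        Quot.mk (SGmRel G m) g = c ∧ (Finset.univ.image g).card ≤ d - 1} := by
  let : Fintype G := Fintype.ofEquiv _ e
  have hm : m = m - d + d := by omega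
  have hinj := SGm.appendEnum_injective e hm
  refine ⟨fun h h' hq => @hinj (Quot.mk _ h) (Quot.mk _ h') hq, ?_⟩
  have hcard : Fintype.card G = d := by simp [Fintype.card_congr e.symm]
  have hS : {c : SGm G m | ∃ g : Fin m → G,
      Quot.mk (SGmRel G m) g = c ∧ #(univ.image g) ≤ d - 1} =
      (Set.range (SGm.appendEnum e hm))ᶜ := by
    simp only [← hcard, card_image_univ_le_pred_iff, SGm.compl_range_appendEnum]
    rfl
  have : Finite (SGm G m) := Quot.finite _
  rw [← Set.ncard_range_of_injective hinj, ← Set.ncard_compl, ← hS, ← Nat.card_coe_set_eq]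
  rfl
end
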